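/- arXiv:1806.10025 — 3 statements merged into one kernel-verified Lean document; each statement's English description precedes it below -/
import Mathlib

section
/- Let P : S → Distr(S) be a Markov chain on a finite set S and let p_min > 0 be the minimum positive transition probability. Then for any state s and any measurable set of infinite paths Φ from s that is invariant under the shift and has measure strictly less than 1 from some reachable state, Φ has measure strictly less than 1 from s. Equivalently: if Φ is shift-invariant (tail) and has measure 1 from s, then it has measure 1 from every state reachable from s. -/
open MeasureTheory ENNReal

lemma stmt_13_aux {S : Type*} [Fintype S] (a x : S → ℝ≥0∞)
    (ha : ∑ t', a t' = 1) (hx : ∀ t', x t' ≤ 1)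
    (hsum : ∑ t', a t' * x t' = 1) (t : S) (hat : 0 < a t) : x t = 1 := by
  classical
  by_contra h
  have hxt : x t < 1 := lt_of_le_of_ne (hx t) h
  have hatop : a t ≠ ⊤ := by
    refine ne_top_of_le_ne_top (by simp) (le_of_le_of_eq ?_ ha)
    exact Finset.single_le_sum (fun _ _ => zero_le) (Finset.mem_univ t)
  have hlt : a t * x t < a t := by
    calc a t * x t < a t * 1 := by
          exact (ENNReal.mul_lt_mul_iff_right hat.ne' hatop).mpr hxt
      _ = a t := mul_one _
  have hrest : ∑ t' ∈ Finset.univ.erase t, a t' * x t' ≤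
      ∑ t' ∈ Finset.univ.erase t, a t' :=
    Finset.sum_le_sum (fun i _ => by
      calc a i * x i ≤ a i * 1 := mul_le_mul_right (hx i) _
        _ = a i := mul_one _)
  have hresttop : (∑ t' ∈ Finset.univ.erase t, a t') ≠ ⊤ := by
    refine ne_top_of_le_ne_top (by simp) (le_of_le_of_eq ?_ ha)
    exact Finset.sum_le_sum_of_subset (Finset.subset_univ _)
  have h1 : (1 : ℝ≥0∞) < 1 := by
    calc (1 : ℝ≥0∞) = ∑ t', a t' * x t' := hsum.symm
      _ = a t * x t + ∑ t' ∈ Finset.univ.erase t, a t' * x t' :=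
          (Finset.add_sum_erase _ _ (Finset.mem_univ t)).symm
      _ ≤ a t * x t + ∑ t' ∈ Finset.univ.erase t, a t' := add_le_add_right hrest _
      _ < a t + ∑ t' ∈ Finset.univ.erase t, a t' :=
          ENNReal.add_lt_add_right hresttop hlt
      _ = ∑ t', a t' := Finset.add_sum_erase _ _ (Finset.mem_univ t)
      _ = 1 := ha
  exact absurd h1 (lt_irrefl _)

/-- If a shift-invariant (tail) event has probability 1 from `s` under the Markov
measures of a finite Markov chain, then it has probability 1 from every state
reachable from `s`. -/
theorem stmt_13 {S : Type*} [Fintype S] [MeasurableSpace S] [MeasurableSingletonClass S]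
    (P : S → S → ℝ≥0∞) (hdistr : ∀ t, ∑ t', P t t' = 1)
    (μ : S → Measure (ℕ → S)) (hprob : ∀ t, IsProbabilityMeasure (μ t))
    (hstart : ∀ t, μ t {w | w 0 = t} = 1)
    (hMarkov : ∀ (t : S) (A : Set (ℕ → S)), MeasurableSet A →
      μ t ((fun w (n : ℕ) => w (n + 1)) ⁻¹' A) = ∑ t', P t t' * μ t' A)
    (Φ : Set (ℕ → S)) (hmeas : MeasurableSet Φ)
    (hshift : (fun w (n : ℕ) => w (n + 1)) ⁻¹' Φ = Φ)
    (s : S) (hΦs : μ s Φ = 1)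
    (t : S) (hreach : Relation.ReflTransGen (fun a b => 0 < P a b) s t) :
    μ t Φ = 1 := by
  induction hreach with
  | refl => exact hΦs
  | tail hbc hedge ih =>
    rename_i b c
    have hM := hMarkov b Φ hmeas
    rw [hshift, ih] at hM
    exact stmt_13_aux (P b) (fun t' => μ t' Φ) (hdistr b)
      (fun t' => prob_le_one) hM.symm c hedge
end

section
/- In a finite Markov chain, for any state s and any subset U ⊆ S, the set of infinite paths from s that visit U infinitely often has measure 1 if and only if from every state reachable from s, U is reachable. (Special case of: measure-one of a Büchi objective equals a structural condition on the graph.) -/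
open MeasureTheory ENNReal
open scoped Classical

set_option linter.unusedSectionVars false

namespace Stmt14

variable {S : Type*} [Fintype S]

/-! ### Algebraic part: the "avoid `U`" operator and its iterates -/

/-- one-step "avoid `U`" operator -/
noncomputable def T (P : S → S → ℝ≥0∞) (U : Set S) (f : S → ℝ≥0∞) : S → ℝ≥0∞ :=
  fun t => if t ∈ U then 0 else ∑ t', P t t' * f t'

/-- probability to avoid `U` for `n` steps -/
noncomputable def q (P : S → S → ℝ≥0∞) (U : Set S) (n : ℕ) : S → ℝ≥0∞ :=
  (T P U)^[n] (fun _ => 1)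

variable {P : S → S → ℝ≥0∞} {U : Set S}

lemma q_zero : q P U 0 = fun _ => 1 := rfl

lemma q_succ (n : ℕ) : q P U (n + 1) = T P U (q P U n) := by
  unfold q; rw [Function.iterate_succ_apply']

lemma T_mono {f g : S → ℝ≥0∞} (h : ∀ t, f t ≤ g t) : ∀ t, T P U f t ≤ T P U g t := by
  intro t
  unfold T
  split
  · exact le_rfl
  · exact Finset.sum_le_sum fun t' _ => mul_le_mul_right (h t') _

lemma iter_T_mono {f g : S → ℝ≥0∞} (h : ∀ t, f t ≤ g t) (n : ℕ) :
    ∀ t, (T P U)^[n] f t ≤ (T P U)^[n] g t := by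
  induction n generalizing f g with
  | zero => exact h
  | succ n ih =>
    rw [Function.iterate_succ_apply, Function.iterate_succ_apply]
    exact ih (T_mono h)

lemma T_const_mul (c : ℝ≥0∞) (f : S → ℝ≥0∞) :
    T P U (fun t => c * f t) = fun t => c * T P U f t := by
  funext t
  unfold T
  split
  · simp
  · rw [Finset.mul_sum]
    congr 1; funext t'; ring

lemma iter_T_const_mul (c : ℝ≥0∞) (f : S → ℝ≥0∞) (n : ℕ) :
    (T P U)^[n] (fun t => c * f t) = fun t => c * (T P U)^[n] f t := by
  induction n generalizing f with
  | zero => rfl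
  | succ n ih =>
    rw [Function.iterate_succ_apply, Function.iterate_succ_apply, T_const_mul]
    exact ih _

lemma q_le_one (hdistr : ∀ t, ∑ t', P t t' = 1) (n : ℕ) : ∀ t, q P U n t ≤ 1 := by
  induction n with
  | zero => intro t; exact le_rfl
  | succ n ih =>
    intro t
    rw [q_succ]
    unfold T
    split
    · exact zero_le_one
    · calc ∑ t', P t t' * q P U n t' ≤ ∑ t', P t t' * 1 :=
            Finset.sum_le_sum fun t' _ => mul_le_mul_right (ih t') _
        _ = 1 := by simp [hdistr t]

lemma q_antitone (hdistr : ∀ t, ∑ t', P t t' = 1) :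
    ∀ {m n : ℕ}, m ≤ n → ∀ t, q P U n t ≤ q P U m t := by
  have step : ∀ n t, q P U (n + 1) t ≤ q P U n t := by
    intro n
    induction n with
    | zero => intro t; exact q_le_one hdistr 1 t
    | succ n ih =>
      intro t
      have ih' : ∀ t, T P U (q P U n) t ≤ q P U n t := by
        intro t'; rw [← q_succ]; exact ih t'
      rw [q_succ, q_succ]
      exact T_mono ih' t
  intro m n h t
  induction h with
  | refl => exact le_rfl
  | step _ ih => exact le_trans (step _ t) ih

/-- locality of `T` iterates on a closed set -/
lemma iter_T_local {C : Set S} (hC : ∀ a ∈ C, ∀ b, 0 < P a b → b ∈ C) (n : ℕ) :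
    ∀ {f g : S → ℝ≥0∞}, (∀ t ∈ C, f t = g t) → ∀ t ∈ C, (T P U)^[n] f t = (T P U)^[n] g t := by
  induction n with
  | zero => intro f g h t ht; exact h t ht
  | succ n ih =>
    intro f g h t ht
    rw [Function.iterate_succ_apply, Function.iterate_succ_apply]
    refine ih (fun a ha => ?_) t ht
    unfold T
    split
    · rfl
    · refine Finset.sum_congr rfl fun b _ => ?_
      by_cases hb : 0 < P a b
      · rw [h b (hC a ha b hb)]
      · have : P a b = 0 := by simpa [pos_iff_ne_zero] using hb
        simp [this]

/-- if `f ≤ c` on a closed set `C`, then `T^[n] f ≤ c * q n` on `C`. -/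
lemma iter_T_le_of_le_on {C : Set S} (hC : ∀ a ∈ C, ∀ b, 0 < P a b → b ∈ C)
    {f : S → ℝ≥0∞} {c : ℝ≥0∞} (hf : ∀ t ∈ C, f t ≤ c) (n : ℕ) :
    ∀ t ∈ C, (T P U)^[n] f t ≤ c * q P U n t := by
  intro t ht
  set g : S → ℝ≥0∞ := fun a => if a ∈ C then f a else c with hg
  have h1 : (T P U)^[n] f t = (T P U)^[n] g t :=
    iter_T_local hC n (fun a ha => by simp [hg, ha]) t ht
  have h2 : ∀ a, g a ≤ c * (fun _ => (1:ℝ≥0∞)) a := by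
    intro a; simp only [hg, mul_one]
    split
    · exact hf a ‹_›
    · exact le_rfl
  calc (T P U)^[n] f t = (T P U)^[n] g t := h1
    _ ≤ (T P U)^[n] (fun a => c * (fun _ => (1:ℝ≥0∞)) a) t := iter_T_mono h2 n t
    _ = c * q P U n t := by rw [iter_T_const_mul]; rfl

lemma q_reach_lt_one (hdistr : ∀ t, ∑ t', P t t' = 1) {t u : S}
    (h : Relation.ReflTransGen (fun a b => 0 < P a b) t u) (hu : u ∈ U) :
    ∃ n, q P U n t < 1 := by
  induction h using Relation.ReflTransGen.head_induction_on with
  | refl =>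
    refine ⟨1, ?_⟩
    rw [q_succ]
    unfold T
    simp [hu]
  | head hac _ ih =>
    rename_i a c _
    obtain ⟨n, hn⟩ := ih
    refine ⟨n + 1, ?_⟩
    rw [q_succ]
    unfold T
    split
    · exact zero_lt_one
    · set δ : ℝ≥0∞ := P a c * (1 - q P U n c) with hδ
      have hδ0 : δ ≠ 0 := by
        refine mul_ne_zero (by exact_mod_cast hac.ne') ?_
        rw [← pos_iff_ne_zero]
        exact tsub_pos_iff_lt.mpr hn
      have hsum_le : ∑ t', P a t' * q P U n t' ≤ 1 := by
        calc ∑ t', P a t' * q P U n t' ≤ ∑ t', P a t' * 1 :=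
              Finset.sum_le_sum fun t' _ => mul_le_mul_right (q_le_one hdistr n t') _
          _ = 1 := by simp [hdistr a]
      have key : ∑ t', P a t' * q P U n t' + δ ≤ 1 := by
        have e1 : ∑ t', P a t' * q P U n t' + δ
            = ∑ t', (P a t' * q P U n t' + if t' = c then δ else 0) := by
          rw [Finset.sum_add_distrib, Finset.sum_ite_eq' Finset.univ c fun _ => δ]
          simp
        rw [e1]
        calc ∑ t', (P a t' * q P U n t' + if t' = c then δ else 0)
            ≤ ∑ t', P a t' := by
              refine Finset.sum_le_sum fun t' _ => ?_
              by_cases ht' : t' = c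
              · subst ht'
                rw [if_pos rfl, hδ, ← mul_add, add_tsub_cancel_of_le (q_le_one hdistr n t')]
                simp
              · rw [if_neg ht', add_zero]
                exact mul_le_mul_right (q_le_one hdistr n t') _ |>.trans (by simp)
          _ = 1 := hdistr a
      have hlt : ∑ t', P a t' * q P U n t' < ∑ t', P a t' * q P U n t' + δ :=
        ENNReal.lt_add_right (ne_top_of_le_ne_top one_ne_top hsum_le) hδ0
      exact lt_of_lt_of_le hlt key

lemma q_geo {C : Set S} (hC : ∀ a ∈ C, ∀ b, 0 < P a b → b ∈ C)
    {N : ℕ} {ρ : ℝ≥0∞} (hρ : ∀ t ∈ C, q P U N t ≤ ρ) :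
    ∀ k, ∀ t ∈ C, q P U (N * k) t ≤ ρ ^ k := by
  intro k
  induction k with
  | zero => intro t ht; rw [Nat.mul_zero]; simp [q]
  | succ k ih =>
    intro t ht
    have h1 : q P U (N * (k + 1)) = (T P U)^[N] (q P U (N * k)) := by
      unfold q
      rw [← Function.iterate_add_apply]
      congr 1
      ring
    rw [h1]
    calc (T P U)^[N] (q P U (N * k)) t ≤ ρ ^ k * q P U N t :=
          iter_T_le_of_le_on hC ih N t ht
      _ ≤ ρ ^ k * ρ := mul_le_mul_right (hρ t ht) _
      _ = ρ ^ (k + 1) := (pow_succ ρ k).symm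

/-! ### Measure-theoretic part -/

variable [MeasurableSpace S] [MeasurableSingletonClass S]

lemma measAll (A : Set S) : MeasurableSet A := (Set.to_countable A).measurableSet

lemma measCoord (n : ℕ) (A : Set S) : MeasurableSet {w : ℕ → S | w n ∈ A} :=
  (measurable_pi_apply n) (measAll A)

def shft (m : ℕ) (w : ℕ → S) : ℕ → S := fun n => w (n + m)

lemma measurable_shft (m : ℕ) : Measurable (shft (S := S) m) :=
  measurable_pi_lambda _ fun n => measurable_pi_apply (n + m)

def avoid (U : Set S) (n : ℕ) : Set (ℕ → S) := {w | ∀ i < n, w i ∉ U}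

lemma meas_avoid (U : Set S) (n : ℕ) : MeasurableSet (avoid U n) := by
  have h : avoid U n = ⋂ i, ⋂ (_ : i < n), {w : ℕ → S | w i ∈ Uᶜ} := by
    ext w; simp [avoid]
  rw [h]
  exact MeasurableSet.iInter fun i => MeasurableSet.iInter fun _ => measCoord i _

lemma buchi_eq (U : Set S) : {w : ℕ → S | {n | w n ∈ U}.Infinite}
    = ⋂ m, ⋃ n, ⋃ (_ : m ≤ n), {w : ℕ → S | w n ∈ U} := by
  ext w
  simp only [Set.mem_setOf_eq, Set.mem_iInter, Set.mem_iUnion]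
  constructor
  · intro h m
    by_contra hc
    push_neg at hc
    refine h (Set.Finite.subset (Set.finite_lt_nat m) fun n hn => ?_)
    simp only [Set.mem_setOf_eq] at hn ⊢
    by_contra hge
    push_neg at hge
    exact hc n hge hn
  · intro h
    apply Set.infinite_of_not_bddAbove
    rintro ⟨b, hb⟩
    obtain ⟨n, hn, hwn⟩ := h (b + 1)
    exact absurd (hb hwn) (by omega)

lemma meas_buchi (U : Set S) : MeasurableSet {w : ℕ → S | {n | w n ∈ U}.Infinite} := by
  rw [buchi_eq]
  exact MeasurableSet.iInter fun m => MeasurableSet.iUnion fun n =>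
    MeasurableSet.iUnion fun _ => measCoord n U

variable (μ : S → Measure (ℕ → S))

noncomputable def pm (m : ℕ) (t t' : S) : ℝ≥0∞ := μ t {w | w m = t'}

variable {μ}

section
variable (hprob : ∀ t, IsProbabilityMeasure (μ t)) (hstart : ∀ t, μ t {w | w 0 = t} = 1)
include hprob hstart

lemma null_off_start (t : S) {B : Set (ℕ → S)} (hB : B ⊆ {w | ¬ w 0 = t}) : μ t B = 0 := by
  have hm : MeasurableSet {w : ℕ → S | w 0 = t} := measCoord 0 {t}
  have := hprob t
  have h0 : μ t {w : ℕ → S | w 0 = t}ᶜ = 0 := by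
    rw [measure_compl hm (measure_ne_top _ _), hstart t, measure_univ, tsub_self]
  exact le_antisymm (le_trans (measure_mono hB) h0.le) zero_le

lemma pm_zero (t t' : S) : pm μ 0 t t' = if t' = t then 1 else 0 := by
  unfold pm
  by_cases h : t' = t
  · subst h; rw [if_pos rfl]; exact hstart t'
  · rw [if_neg h]
    exact null_off_start hprob hstart t fun w hw => by
      simp only [Set.mem_setOf_eq] at hw ⊢; rw [hw]; exact h

lemma compl_null_one (t : S) {E : Set (ℕ → S)} (h : μ t Eᶜ = 0) : μ t E = 1 := by
  have := hprob t
  refine le_antisymm prob_le_one ?_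
  calc (1:ℝ≥0∞) = μ t Set.univ := measure_univ.symm
    _ = μ t (E ∪ Eᶜ) := by rw [Set.union_compl_self]
    _ ≤ μ t E + μ t Eᶜ := measure_union_le _ _
    _ = μ t E := by rw [h, add_zero]

end

lemma measure_inter_of_compl_null {X Y : Set (ℕ → S)} {t : S} (h : μ t Xᶜ = 0) :
    μ t (X ∩ Y) = μ t Y := by
  refine le_antisymm (measure_mono Set.inter_subset_right) ?_
  calc μ t Y ≤ μ t (X ∩ Y ∪ Xᶜ ∩ Y) :=
        measure_mono (by intro y hy; by_cases hx : y ∈ X <;> simp [hx, hy])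
    _ ≤ μ t (X ∩ Y) + μ t (Xᶜ ∩ Y) := measure_union_le _ _
    _ ≤ μ t (X ∩ Y) + 0 := by
        gcongr
        exact le_trans (measure_mono Set.inter_subset_left) h.le
    _ = μ t (X ∩ Y) := add_zero _

section
variable (hprob : ∀ t, IsProbabilityMeasure (μ t)) (hstart : ∀ t, μ t {w | w 0 = t} = 1)
  (hMarkov : ∀ (t : S) (A : Set (ℕ → S)), MeasurableSet A →
      μ t ((fun w (n : ℕ) => w (n + 1)) ⁻¹' A) = ∑ t', P t t' * μ t' A)
include hprob hstart hMarkov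

lemma pm_succ (m : ℕ) (t t' : S) : pm μ (m + 1) t t' = ∑ t'', P t t'' * pm μ m t'' t' := by
  have h : {w : ℕ → S | w (m + 1) = t'} = (fun w (n : ℕ) => w (n + 1)) ⁻¹' {w | w m = t'} := rfl
  unfold pm
  rw [h, hMarkov t _ (show MeasurableSet {w : ℕ → S | w m = t'} from measCoord m {t'})]

lemma pm_sum (hdistr : ∀ t, ∑ t', P t t' = 1) (m : ℕ) (t : S) : ∑ t', pm μ m t t' = 1 := by
  induction m generalizing t with
  | zero =>
    simp only [pm_zero hprob hstart]
    rw [Finset.sum_ite_eq' Finset.univ t fun _ => (1:ℝ≥0∞)]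
    simp
  | succ m ih =>
    simp only [pm_succ hprob hstart hMarkov]
    rw [Finset.sum_comm]
    calc ∑ t'', ∑ t', P t t'' * pm μ m t'' t'
        = ∑ t'', P t t'' * ∑ t', pm μ m t'' t' := by
          refine Finset.sum_congr rfl fun t'' _ => (Finset.mul_sum _ _ _).symm
      _ = ∑ t'', P t t'' := by
          refine Finset.sum_congr rfl fun t'' _ => by rw [ih t'', mul_one]
      _ = 1 := hdistr t

lemma markov_iter (m : ℕ) (t : S) {A : Set (ℕ → S)} (hA : MeasurableSet A) :
    μ t (shft m ⁻¹' A) = ∑ t', pm μ m t t' * μ t' A := by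
  induction m generalizing t with
  | zero =>
    have h : shft (S := S) 0 ⁻¹' A = A := rfl
    rw [h]
    simp only [pm_zero hprob hstart, ite_mul, one_mul, zero_mul]
    rw [Finset.sum_ite_eq' Finset.univ t (fun t' => μ t' A)]
    simp
  | succ m ih =>
    have h : shft (S := S) (m + 1) ⁻¹' A = (fun w (n : ℕ) => w (n + 1)) ⁻¹' (shft m ⁻¹' A) := rfl
    rw [h, hMarkov t _ ((measurable_shft m) hA)]
    have e : ∀ t'', P t t'' * μ t'' (shft m ⁻¹' A)
        = ∑ t', P t t'' * (pm μ m t'' t' * μ t' A) := by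
      intro t''
      rw [ih t'', Finset.mul_sum]
    rw [Finset.sum_congr rfl fun t'' _ => e t'', Finset.sum_comm]
    refine Finset.sum_congr rfl fun t' _ => ?_
    rw [pm_succ hprob hstart hMarkov, Finset.sum_mul]
    exact Finset.sum_congr rfl fun t'' _ => (mul_assoc _ _ _).symm

lemma closed_invariant {C : Set S} (hdistr : ∀ t, ∑ t', P t t' = 1)
    (hC : ∀ a ∈ C, ∀ b, 0 < P a b → b ∈ C) (m : ℕ) :
    ∀ t ∈ C, μ t {w | w m ∈ C} = 1 := by
  induction m with
  | zero =>
    intro t ht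
    have := hprob t
    refine le_antisymm prob_le_one ?_
    calc (1:ℝ≥0∞) = μ t {w | w 0 = t} := (hstart t).symm
      _ ≤ μ t {w | w 0 ∈ C} := measure_mono fun w hw => by
          simp only [Set.mem_setOf_eq] at hw ⊢; rw [hw]; exact ht
  | succ m ih =>
    intro t ht
    have h : {w : ℕ → S | w (m + 1) ∈ C} = (fun w (n : ℕ) => w (n + 1)) ⁻¹' {w | w m ∈ C} := rfl
    rw [h, hMarkov t _ (measCoord m C)]
    rw [← hdistr t]
    refine Finset.sum_congr rfl fun t' _ => ?_
    by_cases ht' : t' ∈ C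
    · rw [ih t' ht', mul_one]
    · have : P t t' = 0 := by
        by_contra hne
        exact ht' (hC t ht t' (pos_iff_ne_zero.mpr hne))
      simp [this]

lemma coord_null_off {C : Set S} (hdistr : ∀ t, ∑ t', P t t' = 1)
    (hC : ∀ a ∈ C, ∀ b, 0 < P a b → b ∈ C) (m : ℕ) {t : S} (ht : t ∈ C)
    {V : Set S} (hV : ∀ v ∈ V, v ∉ C) : μ t {w | w m ∈ V} = 0 := by
  have := hprob t
  have h1 : μ t {w : ℕ → S | w m ∈ C}ᶜ = 0 := by
    rw [measure_compl (measCoord m C) (measure_ne_top _ _),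
      closed_invariant hprob hstart hMarkov hdistr hC m t ht, measure_univ, tsub_self]
  refine le_antisymm (le_trans (measure_mono ?_) h1.le) zero_le
  intro w hw
  simp only [Set.mem_setOf_eq] at hw
  simp only [Set.mem_compl_iff, Set.mem_setOf_eq]
  exact hV _ hw

lemma pm_zero_off {C : Set S} (hdistr : ∀ t, ∑ t', P t t' = 1)
    (hC : ∀ a ∈ C, ∀ b, 0 < P a b → b ∈ C) (m : ℕ) {t t' : S} (ht : t ∈ C) (ht' : t' ∉ C) :
    pm μ m t t' = 0 := by
  refine coord_null_off hprob hstart hMarkov hdistr hC m ht (V := {t'}) ?_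
  intro v hv
  simp only [Set.mem_singleton_iff] at hv
  subst hv; exact ht'

lemma q_eq (hdistr : ∀ t, ∑ t', P t t' = 1) (U : Set S) :
    ∀ n t, μ t (avoid U n) = q P U n t := by
  intro n
  induction n with
  | zero =>
    intro t
    have h : avoid (S := S) U 0 = Set.univ := by ext w; simp [avoid]
    have := hprob t
    rw [h, measure_univ]; rfl
  | succ n ih =>
    intro t
    have hsplit : avoid U (n + 1)
        = {w : ℕ → S | w 0 ∉ U} ∩ (fun w (k : ℕ) => w (k + 1)) ⁻¹' avoid U n := by
      ext w
      simp only [avoid, Set.mem_setOf_eq, Set.mem_inter_iff, Set.mem_preimage]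
      constructor
      · intro h
        exact ⟨h 0 (Nat.succ_pos n), fun i hi => h (i + 1) (by omega)⟩
      · rintro ⟨h0, h⟩ i hi
        cases i with
        | zero => exact h0
        | succ i => exact h i (by omega)
    rw [hsplit, q_succ]
    by_cases ht : t ∈ U
    · have hsub : ({w : ℕ → S | w 0 ∉ U} ∩ (fun w (k : ℕ) => w (k + 1)) ⁻¹' avoid U n)
          ⊆ {w : ℕ → S | ¬ w 0 = t} := by
        intro w hw he
        exact hw.1 (he ▸ ht)
      rw [null_off_start hprob hstart t hsub]
      unfold T
      rw [if_pos ht]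
    · have hcompl : μ t {w : ℕ → S | w 0 ∉ U}ᶜ = 0 := by
        refine null_off_start hprob hstart t fun w hw => ?_
        simp only [Set.mem_compl_iff, Set.mem_setOf_eq, not_not] at hw
        intro he
        exact ht (he ▸ hw)
      rw [measure_inter_of_compl_null hcompl, hMarkov t _ (meas_avoid U n)]
      unfold T
      rw [if_neg ht]
      exact Finset.sum_congr rfl fun t' _ => by rw [ih t']

lemma pm_pos {s t : S} (h : Relation.ReflTransGen (fun a b => 0 < P a b) s t) :
    ∃ m, 0 < pm μ m s t := by
  induction h using Relation.ReflTransGen.head_induction_on with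
  | refl =>
    refine ⟨0, ?_⟩
    rw [pm_zero hprob hstart, if_pos rfl]
    exact zero_lt_one
  | head hac _ ih =>
    rename_i a c _
    obtain ⟨m, hm⟩ := ih
    refine ⟨m + 1, ?_⟩
    rw [pm_succ hprob hstart hMarkov]
    calc (0:ℝ≥0∞) < P a c * pm μ m c t :=
          ENNReal.mul_pos (by exact_mod_cast hac.ne') hm.ne'
      _ ≤ ∑ t'', P a t'' * pm μ m t'' t :=
          Finset.single_le_sum (f := fun t'' => P a t'' * pm μ m t'' t)
            (fun _ _ => zero_le) (Finset.mem_univ c)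

end

end Stmt14

/-- In a finite Markov chain, the set of paths from `s` visiting `U` infinitely
often has measure 1 iff from every state reachable from `s`, `U` is reachable. -/
theorem stmt_14 {S : Type*} [Fintype S] [MeasurableSpace S] [MeasurableSingletonClass S]
    (P : S → S → ℝ≥0∞) (hdistr : ∀ t, ∑ t', P t t' = 1)
    (μ : S → Measure (ℕ → S)) (hprob : ∀ t, IsProbabilityMeasure (μ t))
    (hstart : ∀ t, μ t {w | w 0 = t} = 1)
    (hMarkov : ∀ (t : S) (A : Set (ℕ → S)), MeasurableSet A →
      μ t ((fun w (n : ℕ) => w (n + 1)) ⁻¹' A) = ∑ t', P t t' * μ t' A)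
    (s : S) (U : Set S) :
    μ s {w | {n | w n ∈ U}.Infinite} = 1 ↔
      ∀ t, Relation.ReflTransGen (fun a b => 0 < P a b) s t →
        ∃ u ∈ U, Relation.ReflTransGen (fun a b => 0 < P a b) t u := by
  classical
  open Stmt14 in
  constructor
  · -- measure one → structural condition
    intro hone t hreach
    by_contra hno
    push_neg at hno
    set D := {t' | Relation.ReflTransGen (fun a b => 0 < P a b) t t'} with hD
    have hDclosed : ∀ a ∈ D, ∀ b, 0 < P a b → b ∈ D := fun a ha b hb => ha.tail hb
    have htD : t ∈ D := Relation.ReflTransGen.refl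
    -- from t we never hit U
    have hUn : ∀ m, μ t {w | w m ∈ U} = 0 := fun m =>
      coord_null_off hprob hstart hMarkov hdistr hDclosed m htD
        (fun v hv hvD => hno v hv hvD)
    have hnoU : μ t {w | ∀ n, w n ∉ U} = 1 := by
      refine compl_null_one hprob hstart t ?_
      have hsub : {w : ℕ → S | ∀ n, w n ∉ U}ᶜ ⊆ ⋃ m, {w : ℕ → S | w m ∈ U} := by
        intro w hw
        simp only [Set.mem_compl_iff, Set.mem_setOf_eq, not_forall, not_not] at hw
        obtain ⟨n, hn⟩ := hw
        exact Set.mem_iUnion.mpr ⟨n, hn⟩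
      refine le_antisymm (le_trans (measure_mono hsub) ?_) zero_le
      calc μ t (⋃ m, {w : ℕ → S | w m ∈ U}) ≤ ∑' m, μ t {w : ℕ → S | w m ∈ U} :=
            measure_iUnion_le _
        _ = 0 := by simp [hUn]
    obtain ⟨m, hm⟩ := pm_pos hprob hstart hMarkov hreach
    have hAmeas : MeasurableSet {w : ℕ → S | ∀ n, w n ∉ U} := by
      have h : {w : ℕ → S | ∀ n, w n ∉ U} = ⋂ n, {w : ℕ → S | w n ∈ Uᶜ} := by
        ext w; simp
      rw [h]
      exact MeasurableSet.iInter fun n => measCoord n _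
    have hpos : 0 < μ s (shft m ⁻¹' {w : ℕ → S | ∀ n, w n ∉ U}) := by
      rw [markov_iter hprob hstart hMarkov m s hAmeas]
      calc (0:ℝ≥0∞) < pm μ m s t * μ t {w | ∀ n, w n ∉ U} := by
            rw [hnoU, mul_one]; exact hm
        _ ≤ ∑ t', pm μ m s t' * μ t' {w | ∀ n, w n ∉ U} :=
            Finset.single_le_sum (f := fun t' => pm μ m s t' * μ t' {w | ∀ n, w n ∉ U})
              (fun _ _ => zero_le) (Finset.mem_univ t)
    have hsub2 : shft m ⁻¹' {w : ℕ → S | ∀ n, w n ∉ U}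
        ⊆ {w : ℕ → S | {n | w n ∈ U}.Infinite}ᶜ := by
      intro w hw
      simp only [Set.mem_preimage, Set.mem_setOf_eq, shft] at hw
      simp only [Set.mem_compl_iff, Set.mem_setOf_eq]
      intro hinf
      refine hinf (Set.Finite.subset (Set.finite_lt_nat m) ?_)
      intro n hn
      simp only [Set.mem_setOf_eq] at hn ⊢
      by_contra hge
      push_neg at hge
      exact hw (n - m) (by rwa [Nat.sub_add_cancel hge])
    have := hprob s
    have hb : μ s {w : ℕ → S | {n | w n ∈ U}.Infinite}ᶜ = 0 := by
      rw [measure_compl (meas_buchi U) (measure_ne_top _ _), hone, measure_univ, tsub_self]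
    have hcontr := lt_of_lt_of_le hpos (measure_mono hsub2)
    rw [hb] at hcontr
    exact lt_irrefl _ hcontr
  · -- structural condition → measure one
    intro H
    set C := {t | Relation.ReflTransGen (fun a b => 0 < P a b) s t} with hC
    have hCc : ∀ a ∈ C, ∀ b, 0 < P a b → b ∈ C := fun a ha b hb => ha.tail hb
    have hsC : s ∈ C := Relation.ReflTransGen.refl
    have hx : ∀ t, t ∈ C → ∃ n, q P U n t < 1 := by
      intro t ht
      obtain ⟨u, hu, hru⟩ := H t ht
      exact q_reach_lt_one hdistr hru hu
    choose! nf hnf using hx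
    set N := Finset.univ.sup nf with hN
    have hqN : ∀ t ∈ C, q P U N t < 1 := fun t ht =>
      lt_of_le_of_lt (q_antitone hdistr (Finset.le_sup (Finset.mem_univ t)) t) (hnf t ht)
    set ρ := (Finset.univ.filter (· ∈ C)).sup (q P U N) with hρ
    have hρ1 : ρ < 1 := by
      rw [hρ, Finset.sup_lt_iff (by simp : (⊥:ℝ≥0∞) < 1)]
      intro t ht
      exact hqN t (Finset.mem_filter.mp ht).2
    have hρle : ∀ t ∈ C, q P U N t ≤ ρ := fun t ht =>
      Finset.le_sup (Finset.mem_filter.mpr ⟨Finset.mem_univ t, ht⟩)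
    have hgeo := q_geo hCc hρle
    have hBnull : ∀ m, μ s {w : ℕ → S | ∀ n, m ≤ n → w n ∉ U} = 0 := by
      intro m
      have hbound : ∀ k, μ s {w : ℕ → S | ∀ n, m ≤ n → w n ∉ U} ≤ ρ ^ k := by
        intro k
        have hsub : {w : ℕ → S | ∀ n, m ≤ n → w n ∉ U} ⊆ shft m ⁻¹' avoid U (N * k) := by
          intro w hw
          simp only [Set.mem_preimage, avoid, shft, Set.mem_setOf_eq] at hw ⊢
          intro i _
          exact hw (i + m) (Nat.le_add_left m i)
        calc μ s {w : ℕ → S | ∀ n, m ≤ n → w n ∉ U}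
            ≤ μ s (shft m ⁻¹' avoid U (N * k)) := measure_mono hsub
          _ = ∑ t', pm μ m s t' * μ t' (avoid U (N * k)) :=
              markov_iter hprob hstart hMarkov m s (meas_avoid U _)
          _ = ∑ t', pm μ m s t' * q P U (N * k) t' := by
              refine Finset.sum_congr rfl fun t' _ => ?_
              rw [q_eq hprob hstart hMarkov hdistr U (N * k) t']
          _ ≤ ∑ t', pm μ m s t' * ρ ^ k := by
              refine Finset.sum_le_sum fun t' _ => ?_
              by_cases ht' : t' ∈ C
              · exact mul_le_mul_right (hgeo k t' ht') _
              · rw [pm_zero_off hprob hstart hMarkov hdistr hCc m hsC ht']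
                simp
          _ = ρ ^ k := by rw [← Finset.sum_mul, pm_sum hprob hstart hMarkov hdistr m s, one_mul]
      have htend := ENNReal.tendsto_pow_atTop_nhds_zero_of_lt_one hρ1
      exact le_antisymm (ge_of_tendsto' htend hbound) zero_le
    refine compl_null_one hprob hstart s ?_
    have hsub : {w : ℕ → S | {n | w n ∈ U}.Infinite}ᶜ
        ⊆ ⋃ m, {w : ℕ → S | ∀ n, m ≤ n → w n ∉ U} := by
      intro w hw
      simp only [Set.mem_compl_iff, Set.mem_setOf_eq] at hw
      have hfin : {n | w n ∈ U}.Finite := Set.not_infinite.mp hw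
      obtain ⟨b, hb⟩ := hfin.bddAbove
      refine Set.mem_iUnion.mpr ⟨b + 1, fun n hn hnU => ?_⟩
      exact absurd (hb hnU) (by omega)
    refine le_antisymm (le_trans (measure_mono hsub) ?_) zero_le
    calc μ s (⋃ m, {w : ℕ → S | ∀ n, m ≤ n → w n ∉ U})
        ≤ ∑' m, μ s {w : ℕ → S | ∀ n, m ≤ n → w n ∉ U} := measure_iUnion_le _
      _ = 0 := by simp [hBnull]
end

section
/- In a finite directed graph (S, E) with every vertex having a successor, for any U ⊆ S the Büchi objective {w ∈ Paths(S,E,s) | w visits U infinitely often} is comeager in Paths(S,E,s) if and only if from every vertex reachable from s there is a path to U. -/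
section Aux

variable {S : Type*} {E : S → S → Prop}

/-- An infinite path starting at any vertex, using successors. -/
lemma aux_ext (hE : ∀ v, ∃ v', E v v') (v : S) :
    ∃ w : ℕ → S, w 0 = v ∧ ∀ i, E (w i) (w (i + 1)) := by
  choose f hf using hE
  refine ⟨fun n => f^[n] v, rfl, fun i => ?_⟩
  show E (f^[i] v) (f^[i+1] v)
  rw [Function.iterate_succ_apply']
  exact hf _

/-- Along a path, later vertices are reachable from earlier ones. -/
lemma aux_reach {w : ℕ → S} (hw : ∀ i, E (w i) (w (i + 1))) {m n : ℕ} (h : m ≤ n) :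
    Relation.ReflTransGen E (w m) (w n) := by
  induction n, h using Nat.le_induction with
  | base => exact Relation.ReflTransGen.refl
  | succ n hmn ih => exact ih.tail (hw n)

/-- Splice: modify a path after time `m` so that it reaches `u`, given
`ReflTransGen E (w m) u`. -/
lemma aux_splice (hE : ∀ v, ∃ v', E v v') {w : ℕ → S} (hw : ∀ i, E (w i) (w (i + 1)))
    (m : ℕ) {u : S} (h : Relation.ReflTransGen E (w m) u) :
    ∃ (w' : ℕ → S) (k : ℕ), m ≤ k ∧ (∀ i ≤ m, w' i = w i) ∧
      (∀ i, E (w' i) (w' (i + 1))) ∧ w' k = u := by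
  induction h with
  | refl => exact ⟨w, m, le_rfl, fun i _ => rfl, hw, rfl⟩
  | @tail b c hab hbc ih =>
      obtain ⟨w', k, hmk, hagree, hw', hk⟩ := ih
      obtain ⟨v, hv0, hv⟩ := aux_ext hE c
      refine ⟨fun n => if n ≤ k then w' n else v (n - (k + 1)), k + 1,
        hmk.trans (Nat.le_succ k), ?_, ?_, ?_⟩
      · intro i hi
        simp only [if_pos (hi.trans hmk)]
        exact hagree i hi
      · intro i
        rcases lt_trichotomy i k with hik | rfl | hik
        · simp only [if_pos hik.le, if_pos (show i + 1 ≤ k from hik)]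
          exact hw' i
        · simp only [if_pos le_rfl, if_neg (by omega : ¬ i + 1 ≤ i)]
          have : i + 1 - (i + 1) = 0 := by omega
          rw [this, hv0, hk]
          exact hbc
        · simp only [if_neg (by omega : ¬ i ≤ k), if_neg (by omega : ¬ i + 1 ≤ k)]
          have : i + 1 - (k + 1) = (i - (k + 1)) + 1 := by omega
          rw [this]
          exact hv _
      · simp only [if_neg (by omega : ¬ k + 1 ≤ k), Nat.succ_sub_one]
        have : k + 1 - (k + 1) = 0 := by omega
        rw [this, hv0]

/-- From `ReflTransGen E s t`, there is a full infinite path from `s` passing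
through `t`. -/
lemma aux_through (hE : ∀ v, ∃ v', E v v') {s t : S} (h : Relation.ReflTransGen E s t) :
    ∃ (w : ℕ → S) (m : ℕ), w 0 = s ∧ (∀ i, E (w i) (w (i + 1))) ∧ w m = t := by
  obtain ⟨w, h0, hw⟩ := aux_ext hE s
  obtain ⟨w', k, hk, hagree, hw', hku⟩ := aux_splice hE hw 0 (h0 ▸ h)
  exact ⟨w', k, by rw [hagree 0 le_rfl, h0], hw', hku⟩

end Aux

/-- In a finite directed graph with every vertex having a successor, the Büchi
objective (visit `U` infinitely often) is comeager in the space of infinite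
paths from `s` iff from every vertex reachable from `s` there is a path to `U`. -/
theorem stmt_15 {S : Type*} [Fintype S] [TopologicalSpace S] [DiscreteTopology S]
    (E : S → S → Prop) (hE : ∀ v, ∃ v', E v v') (s : S) (U : Set S) :
    ({w : {w : ℕ → S // w 0 = s ∧ ∀ i, E (w i) (w (i + 1))} |
        {n | (w : ℕ → S) n ∈ U}.Infinite}
      ∈ residual {w : ℕ → S // w 0 = s ∧ ∀ i, E (w i) (w (i + 1))}) ↔
    ∀ t, Relation.ReflTransGen E s t → ∃ u ∈ U, Relation.ReflTransGen E t u := by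
  set P := {w : ℕ → S // w 0 = s ∧ ∀ i, E (w i) (w (i + 1))} with hP
  -- The defining set is closed, hence `P` is compact.
  have hclosed : IsClosed {w : ℕ → S | w 0 = s ∧ ∀ i, E (w i) (w (i + 1))} := by
    have h1 : IsClosed {w : ℕ → S | w 0 = s} :=
      isClosed_eq (continuous_apply 0) continuous_const
    have h2 : IsClosed {w : ℕ → S | ∀ i, E (w i) (w (i + 1))} := by
      have : {w : ℕ → S | ∀ i, E (w i) (w (i + 1))}
          = ⋂ i, {w : ℕ → S | E (w i) (w (i + 1))} := by
        ext w; simp [Set.mem_iInter]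
      rw [this]
      apply isClosed_iInter
      intro i
      have hc : Continuous fun w : ℕ → S => ((w i, w (i + 1)) : S × S) :=
        (continuous_apply i).prodMk (continuous_apply (i + 1))
      exact (isClosed_discrete {p : S × S | E p.1 p.2}).preimage hc
    have : {w : ℕ → S | w 0 = s ∧ ∀ i, E (w i) (w (i + 1))}
        = {w : ℕ → S | w 0 = s} ∩ {w : ℕ → S | ∀ i, E (w i) (w (i + 1))} := rfl
    rw [this]
    exact h1.inter h2
  haveI : CompactSpace P := isCompact_iff_compactSpace.mp hclosed.isCompact
  haveI : T2Space P := inferInstance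
  haveI : LocallyCompactSpace P := inferInstance
  haveI : BaireSpace P := inferInstance
  -- cylinder neighborhoods in P
  have hcyl_open : ∀ (w : P) (n : ℕ), IsOpen {w' : P | ∀ i < n, (w' : ℕ → S) i = (w : ℕ → S) i} := by
    intro w n
    have : {w' : P | ∀ i < n, (w' : ℕ → S) i = (w : ℕ → S) i}
        = (Subtype.val) ⁻¹' (PiNat.cylinder (w : ℕ → S) n) := rfl
    rw [this]
    exact (PiNat.isOpen_cylinder (fun _ : ℕ => S) _ _).preimage continuous_subtype_val
  have hbasis : ∀ (w : P) (O : Set P), IsOpen O → w ∈ O →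
      ∃ n, {w' : P | ∀ i < n, (w' : ℕ → S) i = (w : ℕ → S) i} ⊆ O := by
    intro w O hO hwO
    rw [isOpen_induced_iff] at hO
    obtain ⟨V, hV, rfl⟩ := hO
    obtain ⟨v, ⟨x, n, rfl⟩, hxv, hvV⟩ :=
      (PiNat.isTopologicalBasis_cylinders (fun _ : ℕ => S)).exists_subset_of_mem_open hwO hV
    refine ⟨n, fun w' hw' => hvV ?_⟩
    intro i hi
    rw [hw' i hi]
    exact hxv i hi
  constructor
  · -- residual → reachability condition
    intro hres t hst
    by_contra hcon
    push_neg at hcon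
    obtain ⟨w0, m, h0, hw0, hm⟩ := aux_through hE hst
    set w : P := ⟨w0, h0, hw0⟩ with hw
    have hdense := dense_of_mem_residual hres
    have hC : IsOpen {w' : P | ∀ i < m + 1, (w' : ℕ → S) i = (w : ℕ → S) i} :=
      hcyl_open w (m + 1)
    obtain ⟨w', hw'B, hw'C⟩ := hdense.exists_mem_open hC
      ⟨w, fun i _ => rfl⟩
    -- every visit of w' to U happens before time m
    have hsub : {n | (w' : ℕ → S) n ∈ U} ⊆ {n | n < m} := by
      intro n hn
      by_contra hnm
      rw [Set.mem_setOf_eq, not_lt] at hnm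
      have hreach : Relation.ReflTransGen E t ((w' : ℕ → S) n) := by
        have := aux_reach (w' : P).2.2 hnm
        rwa [show (w' : ℕ → S) m = t from by
          rw [hw'C m (Nat.lt_succ_self m)]; exact hm] at this
      exact hcon _ hn hreach
    exact hw'B ((Set.finite_lt_nat m).subset hsub)
  · -- reachability condition → residual
    intro hU
    -- Büchi set equals countable intersection of open dense sets
    have hBeq : {w : P | {n | (w : ℕ → S) n ∈ U}.Infinite}
        = ⋂ N : ℕ, {w : P | ∃ n, N < n ∧ (w : ℕ → S) n ∈ U} := by
      ext w
      simp only [Set.mem_setOf_eq, Set.mem_iInter]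
      constructor
      · intro h N
        obtain ⟨n, hn, hNn⟩ := h.exists_gt N
        exact ⟨n, hNn, hn⟩
      · intro h
        apply Set.infinite_of_not_bddAbove
        rintro ⟨b, hb⟩
        obtain ⟨n, hbn, hnU⟩ := h b
        exact absurd (hb hnU) (by omega)
    rw [hBeq]
    rw [countable_iInter_mem]
    intro N
    apply residual_of_dense_open
    · have : {w : P | ∃ n, N < n ∧ (w : ℕ → S) n ∈ U}
          = ⋃ n, ⋃ (_ : N < n), (fun w : P => (w : ℕ → S) n) ⁻¹' U := by
        ext w; simp [Set.mem_iUnion]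
      rw [this]
      apply isOpen_iUnion; intro n; apply isOpen_iUnion; intro _
      exact (isOpen_discrete U).preimage ((continuous_apply n).comp continuous_subtype_val)
    · rw [dense_iff_inter_open]
      rintro O hO ⟨w, hwO⟩
      obtain ⟨n, hn⟩ := hbasis w O hO hwO
      set m := max n (N + 1) with hm
      -- w m is reachable from s
      have hreach : Relation.ReflTransGen E s ((w : ℕ → S) m) := by
        have := aux_reach w.2.2 (Nat.zero_le m)
        rwa [w.2.1] at this
      obtain ⟨u, huU, htu⟩ := hU _ hreach
      obtain ⟨w', k, hmk, hagree, hw', hku⟩ := aux_splice hE w.2.2 m htu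
      have h0' : w' 0 = s := by rw [hagree 0 (Nat.zero_le m)]; exact w.2.1
      refine ⟨⟨w', h0', hw'⟩, ?_, ?_⟩
      · apply hn
        intro i hi
        exact hagree i (hi.le.trans (Nat.le_max_left n (N + 1)))
      · refine ⟨k, lt_of_lt_of_le (lt_of_lt_of_le (Nat.lt_succ_self N)
          (Nat.le_max_right n (N + 1))) hmk, ?_⟩
        show w' k ∈ U
        rw [hku]; exact huU
end
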